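/- arXiv:1207.2430 — 2 statements merged into one kernel-verified Lean document; each statement's English description precedes it below -/
import Mathlib

section
/- Let G = (V,E) be a graph and v ∈ V. Then d(G) − d(G−v) is even, where d denotes the number of dominating sets and G−v is the graph obtained by deleting v. -/
/-!
Brouwer's theorem: every graph has an odd number of dominating sets, so `d(G)` and `d(G - v)`
are both odd. Count the pairs `(A, B)` of vertex sets with `B` outside the closed neighbourhood
of `A`. The relation is symmetric, so swapping is an involution on these pairs whose only fixed
point is `(∅, ∅)`, and their number is odd. For fixed `A` the admissible `B` are the subsets of
the set of vertices not dominated by `A`, so there are `2 ^ k` of them, which is odd exactly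
when `A` is dominating.
-/

open Finset Polynomial

variable {V : Type*}

def dominates (H : SimpleGraph V) (W : Finset V) : Prop :=
  ∀ v : V, v ∈ W ∨ ∃ u ∈ W, H.Adj u v

open scoped Classical in
noncomputable def domPoly [Fintype V] (H : SimpleGraph V) : Polynomial ℤ :=
  ∑ W ∈ Finset.univ.powerset.filter (fun W => dominates H W), X ^ W.card

open scoped Classical in
noncomputable def compOrders [Fintype V] (H : SimpleGraph V) : Multiset ℕ :=
  (Finset.univ : Finset H.ConnectedComponent).val.map (fun c => Nat.card c.supp)

namespace SimpleGraph

section Decidable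

variable [Fintype V] [DecidableEq V] (H : SimpleGraph V) [DecidableRel H.Adj]

def undominated (A : Finset V) : Finset V :=
  {b | ∀ a ∈ A, a ≠ b ∧ ¬ H.Adj a b}

variable {H}

lemma mem_undominated {A : Finset V} {b : V} :
    b ∈ H.undominated A ↔ ∀ a ∈ A, a ≠ b ∧ ¬ H.Adj a b := by
  simp [undominated]

lemma dominates_iff_undominated_eq_empty {A : Finset V} :
    dominates H A ↔ H.undominated A = ∅ := by
  simp only [eq_empty_iff_forall_notMem, mem_undominated, dominates]
  refine forall_congr' fun b => ?_
  by_cases hb : b ∈ A <;> grind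

lemma subset_undominated_comm {A B : Finset V} :
    B ⊆ H.undominated A ↔ A ⊆ H.undominated B := by
  simp only [subset_iff, mem_undominated]
  grind [SimpleGraph.adj_comm]

lemma subset_undominated_self {A : Finset V} : A ⊆ H.undominated A ↔ A = ∅ := by
  simp only [subset_iff, mem_undominated, eq_empty_iff_forall_notMem]
  grind

variable (H)

def separatedPairs : Finset (Finset V × Finset V) :=
  {p | p.2 ⊆ H.undominated p.1}

lemma card_separatedPairs : #H.separatedPairs = ∑ A, 2 ^ #(H.undominated A) := by
  rw [separatedPairs, card_filter, ← univ_product_univ, sum_product]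
  refine sum_congr rfl fun A _ => ?_
  rw [← card_powerset, ← card_filter]
  congr 1
  ext B
  simp

lemma odd_card_separatedPairs : Odd #H.separatedPairs := by
  let swap : Function.End H.separatedPairs := fun p =>
    ⟨p.1.swap, by simpa [separatedPairs, subset_undominated_comm] using p.2⟩
  have hswap : swap ^ 2 ^ 1 = 1 := rfl
  have hfixed : Fintype.card swap.fixedPoints = 1 := by
    refine Fintype.card_eq_one_iff.mpr ⟨⟨⟨(∅, ∅), by simp [separatedPairs]⟩, rfl⟩, ?_⟩
    rintro ⟨⟨⟨A, B⟩, hAB⟩, hfix⟩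
    obtain ⟨rfl, -⟩ : B = A ∧ A = B := by simpa [swap, Function.IsFixedPt] using hfix
    obtain rfl : B = ∅ := by simpa [separatedPairs, subset_undominated_self] using hAB
    rfl
  have key := Equiv.Perm.card_fixedPoints_modEq (p := 2) hswap
  rw [hfixed, Fintype.card_coe] at key
  exact Nat.odd_iff.mpr key

end Decidable

open scoped Classical in
theorem odd_card_dominating [Fintype V] (H : SimpleGraph V) :
    Odd #{W ∈ univ.powerset | dominates H W} := by
  have h := H.odd_card_separatedPairs
  rw [card_separatedPairs, odd_sum_iff_odd_card_odd] at h
  simpa [← Nat.not_even_iff_odd, Nat.even_pow, dominates_iff_undominated_eq_empty] using h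

end SimpleGraph

open scoped Classical in
/-- `d(G) - d(G - v)` is even. -/
theorem stmt_13 [Fintype V] [DecidableEq V] (G : SimpleGraph V) (v : V) :
    Even (((Finset.univ.powerset.filter (fun W => dominates G W)).card : ℤ)
      - ((Finset.univ.powerset.filter
          (fun W => dominates (G.induce {u : V | u ≠ v}) W)).card : ℤ)) := by
  have hG := G.odd_card_dominating
  have hGv := (G.induce {u : V | u ≠ v}).odd_card_dominating
  exact Odd.sub_odd (mod_cast hG) (mod_cast hGv)
end

section
/- Let G = (V,E) be a graph with V nonempty. Call U ⊆ V essential if there exists v ∈ V with N[v] ⊆ U. Then D(G,x) = (−1)^{|V|} · ∑_{U essential} (−1)^{|U|} · [ (1+x)^{|{u ∈ U : N[u] ⊆ U}|} − 1 ]. -/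
/-!
Write `N u` for the closed neighbourhood of `u`. Expanding `(1 + x) ^ #{u | N u ⊆ U}` as a sum of
`x ^ #W` over `W ⊆ {u | N u ⊆ U}` and exchanging the sums gives
`∑_W x ^ #W * ∑_{U ⊇ ⋃_{w ∈ W} N w} (-1) ^ #U`, and the inner alternating sum vanishes unless
`⋃_{w ∈ W} N w = V`, i.e. unless `W` dominates, in which case it is `(-1) ^ #V`.
A non-essential `U` contributes `(1 + x) ^ 0 - 1 = 0`, and the `- 1` terms add up to
`∑_U (-1) ^ #U = 0` because `V` is nonempty.
-/

open Finset Polynomial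

variable {V : Type*}

section AlternatingSums

variable {α ι R : Type*} [CommRing R]

theorem sum_powerset_neg_one_pow_card' [DecidableEq α] (s : Finset α) :
    ∑ t ∈ s.powerset, (-1 : R) ^ #t = if s = ∅ then 1 else 0 := by
  exact_mod_cast congrArg (Int.cast : ℤ → R) sum_powerset_neg_one_pow_card

variable [Fintype α] [DecidableEq α]

theorem sum_superset_neg_one_pow_card (A : Finset α) :
    ∑ U with A ⊆ U, (-1 : R) ^ #U = if A = univ then (-1) ^ Fintype.card α else 0 := by
  have hdisj : ∀ T ∈ (univ \ A).powerset, Disjoint A T := fun T hT =>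
    disjoint_of_subset_right (mem_powerset.1 hT) disjoint_sdiff
  calc ∑ U with A ⊆ U, (-1 : R) ^ #U
      = ∑ U ∈ Icc A univ, (-1 : R) ^ #U := by rw [Icc_eq_filter_powerset, powerset_univ]
    _ = ∑ T ∈ (univ \ A).powerset, (-1 : R) ^ #(A ∪ T) := by
        rw [Icc_eq_image_powerset (subset_univ A), sum_image]
        intro T hT T' hT' (h : A ∪ T = A ∪ T')
        rw [← union_sdiff_cancel_left (hdisj T hT), h, union_sdiff_cancel_left (hdisj T' hT')]
    _ = (-1) ^ #A * ∑ T ∈ (univ \ A).powerset, (-1 : R) ^ #T := by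
        rw [mul_sum]
        exact sum_congr rfl fun T hT => by rw [card_union_of_disjoint (hdisj T hT), pow_add]
    _ = if A = univ then (-1) ^ Fintype.card α else 0 := by
        simp only [sum_powerset_neg_one_pow_card', sdiff_eq_empty_iff_subset, univ_subset_iff]
        split_ifs with h
        · rw [h, card_univ, mul_one]
        · rw [mul_zero]

theorem sum_pow_card_covers_eq [Fintype ι] [DecidableEq ι] (N : ι → Finset α) (x : R) :
    ∑ W : Finset ι with W.biUnion N = univ, x ^ #W
      = (-1) ^ Fintype.card α * ∑ U : Finset α, (-1) ^ #U * (1 + x) ^ #{i | N i ⊆ U} := by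
  have one_add_pow (S : Finset ι) : (1 + x) ^ #S = ∑ W ∈ S.powerset, x ^ #W := by
    simpa [add_comm] using (sum_pow_mul_eq_add_pow x 1 S).symm
  have swap : ∑ U : Finset α, (-1) ^ #U * (1 + x) ^ #{i | N i ⊆ U}
      = ∑ W : Finset ι, ∑ U with W.biUnion N ⊆ U, (-1 : R) ^ #U * x ^ #W := by
    simp_rw [one_add_pow, mul_sum]
    refine sum_comm' fun U W => ?_
    simp [subset_iff (s₁ := W)]
  rw [swap, mul_sum, sum_filter]
  refine sum_congr rfl fun W _ => ?_
  rw [← sum_mul, sum_superset_neg_one_pow_card, ← mul_assoc]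
  split_ifs <;> simp [← pow_add]

theorem sum_pow_card_covers_eq_sum_essential [Nonempty α] (N : α → Finset α)
    (mem_self : ∀ a, a ∈ N a) (x : R) :
    ∑ W : Finset α with W.biUnion N = univ, x ^ #W
      = (-1) ^ Fintype.card α *
          ∑ U : Finset α with ∃ a, N a ⊆ U, (-1) ^ #U * ((1 + x) ^ #{u ∈ U | N u ⊆ U} - 1) := by
  have filter_eq_univ_filter (U : Finset α) :
      {u ∈ U | N u ⊆ U} = ({u | N u ⊆ U} : Finset α) := by
    ext u
    simpa using fun h : N u ⊆ U => h (mem_self u)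
  have alternating_sum : ∑ U : Finset α, (-1 : R) ^ #U = 0 := by
    rw [← powerset_univ, sum_powerset_neg_one_pow_card', if_neg univ_nonempty.ne_empty]
  rw [sum_pow_card_covers_eq, sum_filter_of_ne]
  · simp_rw [filter_eq_univ_filter, mul_sub, mul_one, sum_sub_distrib, alternating_sum, sub_zero]
  · intro U _ hU
    obtain ⟨a, ha⟩ : {u ∈ U | N u ⊆ U}.Nonempty := by
      by_contra h
      simp [not_nonempty_iff_eq_empty.1 h] at hU
    exact ⟨a, (mem_filter.1 ha).2⟩

end AlternatingSums

namespace SimpleGraph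

variable [Fintype V] [DecidableEq V] (G : SimpleGraph V) [DecidableRel G.Adj]

def closedNbhdFinset (v : V) : Finset V :=
  univ.filter (fun x : V => x = v ∨ G.Adj v x)

theorem mem_closedNbhdFinset_self (v : V) : v ∈ G.closedNbhdFinset v := by
  simp [closedNbhdFinset]

theorem biUnion_closedNbhdFinset_eq_univ_iff (W : Finset V) :
    W.biUnion G.closedNbhdFinset = univ ↔ dominates G W := by
  simp only [eq_univ_iff_forall, mem_biUnion, closedNbhdFinset, mem_filter, mem_univ, true_and,
    dominates]
  refine forall_congr' fun v => ⟨?_, ?_⟩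
  · rintro ⟨u, hu, rfl | huv⟩
    exacts [Or.inl hu, Or.inr ⟨u, hu, huv⟩]
  · rintro (hv | ⟨u, hu, huv⟩)
    exacts [⟨v, hv, Or.inl rfl⟩, ⟨u, hu, Or.inr huv⟩]

end SimpleGraph

open scoped Classical in
/-- expansion of `D(G,x)` over essential sets, where `U` is essential
if `N[v] ⊆ U` for some vertex `v`. -/
theorem stmt_17 [Fintype V] [DecidableEq V] [Nonempty V] (G : SimpleGraph V) :
    domPoly G
      = (-1 : Polynomial ℤ) ^ Fintype.card V *
        ∑ U ∈ (Finset.univ : Finset V).powerset.filter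
            (fun U : Finset V =>
              ∃ v : V, Finset.univ.filter (fun x : V => x = v ∨ G.Adj v x) ⊆ U),
          (-1 : Polynomial ℤ) ^ U.card *
            ((1 + X) ^ (U.filter
              (fun u : V =>
                Finset.univ.filter (fun x : V => x = u ∨ G.Adj u x) ⊆ U)).card - 1) := by
  have h := sum_pow_card_covers_eq_sum_essential G.closedNbhdFinset G.mem_closedNbhdFinset_self
    (X : ℤ[X])
  simp only [G.biUnion_closedNbhdFinset_eq_univ_iff] at h
  rw [domPoly, powerset_univ]
  exact h
end
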